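/- If x : ℝ → ℂⁿ solves ẋ(t) = f(t, x(t)) in the Carathéodory sense with f(·, x(·)) locally integrable, then for every k the phasor X_k(t) of x is absolutely continuous and satisfies Ẋ_k(t) = [F(f(·, x(·)))]_k(t) − jkω X_k(t) for almost every t. -/

import Mathlib

/-!
Write `e τ = exp (-jkω τ)`, so that `X_k t = T⁻¹ ∫_{t-T}^t e • x` is a sliding average of the
continuous function `e • x`; it is therefore differentiable everywhere, with derivative
`T⁻¹ (e t • x t - e (t - T) • x (t - T))`. The product rule for the absolutely continuous
function `e • x` turns this into `T⁻¹ ∫_{t-T}^t (e • ẋ - jkω e • x) = F_k(ẋ) t - jkω X_k t`,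
which is continuous in `t`, so the integrated identity is the fundamental theorem of calculus.
-/

open MeasureTheory intervalIntegral Set Filter

/-- Sliding Fourier (phasor) coefficient of a vector-valued signal. -/
noncomputable def phasorV {n : ℕ} (T : ℝ) (x : ℝ → EuclideanSpace ℂ (Fin n)) (k : ℤ)
    (t : ℝ) : EuclideanSpace ℂ (Fin n) :=
  (1 / (T : ℂ)) • ∫ τ in (t - T)..t,
    Complex.exp (-(Complex.I * (k : ℂ) * ((2 * Real.pi / T : ℝ) : ℂ) * (τ : ℂ))) • x τ

theorem MeasureTheory.LocallyIntegrable.intervalIntegrable {E : Type*} [NormedAddCommGroup E]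
    {f : ℝ → E} (hf : LocallyIntegrable f volume) (a b : ℝ) :
    IntervalIntegrable f volume a b :=
  intervalIntegrable_iff.mpr <|
    (hf.integrableOn_isCompact isCompact_uIcc).mono_set uIoc_subset_uIcc

theorem Continuous.hasDerivAt_integral_sub_const {E : Type*} [NormedAddCommGroup E]
    [NormedSpace ℝ E] [CompleteSpace E] {g : ℝ → E} (hg : Continuous g) (T t : ℝ) :
    HasDerivAt (fun t => ∫ τ in (t - T)..t, g τ) (g t - g (t - T)) t := by
  have hsplit : (fun t => ∫ τ in (t - T)..t, g τ)
      = fun t => (∫ τ in (0 : ℝ)..t, g τ) - ∫ τ in (0 : ℝ)..(t - T), g τ := by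
    funext t
    exact (integral_interval_sub_left (hg.intervalIntegrable _ _)
      (hg.intervalIntegrable _ _)).symm
  rw [hsplit]
  exact (hg.integral_hasStrictDerivAt 0 t).hasDerivAt.sub
    ((hg.integral_hasStrictDerivAt 0 (t - T)).hasDerivAt.comp_sub_const t T)

namespace AbsolutelyContinuousOnInterval

theorem of_dist_le {X Y : Type*} [PseudoMetricSpace X] [PseudoMetricSpace Y]
    {f : ℝ → X} {g : ℝ → Y} {a b : ℝ} (hg : AbsolutelyContinuousOnInterval g a b)
    (hfg : ∀ x ∈ uIcc a b, ∀ y ∈ uIcc a b, dist (f x) (f y) ≤ dist (g x) (g y)) :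
    AbsolutelyContinuousOnInterval f a b := by
  refine squeeze_zero' (Eventually.of_forall fun _ => Finset.sum_nonneg fun _ _ => dist_nonneg)
    ?_ hg
  rw [eventually_inf_principal]
  filter_upwards with E hE
  exact Finset.sum_le_sum fun i hi => hfg _ (hE.1 i hi).1 _ (hE.1 i hi).2

variable {E : Type*} [NormedAddCommGroup E] [NormedSpace ℝ E] {a b : ℝ}

theorem of_sub_eq_integral {x F : ℝ → E} (hF : IntervalIntegrable F volume a b)
    (hsol : ∀ s ∈ uIcc a b, ∀ t ∈ uIcc a b, x t - x s = ∫ τ in s..t, F τ) :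
    AbsolutelyContinuousOnInterval x a b := by
  refine (hF.norm.absolutelyContinuousOnInterval_intervalIntegral left_mem_uIcc).of_dist_le
    fun s hs t ht => ?_
  have hint : ∀ u ∈ uIcc a b, IntervalIntegrable (fun τ => ‖F τ‖) volume a u :=
    fun u hu => hF.norm.mono_set (uIcc_subset_uIcc left_mem_uIcc hu)
  rw [dist_eq_norm, Real.dist_eq, hsol t ht s hs,
    integral_interval_sub_left (hint s hs) (hint t ht)]
  exact norm_integral_le_abs_integral_norm

theorem _root_.IntervalIntegrable.absolutelyContinuousOnInterval_primitive {f : ℝ → E}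
    (hf : IntervalIntegrable f volume a b) :
    AbsolutelyContinuousOnInterval (fun x => ∫ v in a..x, f v) a b :=
  of_sub_eq_integral hf fun _ hs _ ht =>
    integral_interval_sub_left (hf.mono_set (uIcc_subset_uIcc left_mem_uIcc ht))
      (hf.mono_set (uIcc_subset_uIcc left_mem_uIcc hs))

-- `g - ∫ₐ g'` is absolutely continuous with a.e. vanishing derivative, hence constant.
theorem integral_eq_sub_of_ae_hasDerivAt [CompleteSpace E] {g g' : ℝ → E}
    (hg : AbsolutelyContinuousOnInterval g a b)
    (hderiv : ∀ᵐ x, x ∈ uIcc a b → HasDerivAt g (g' x) x)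
    (hg' : IntervalIntegrable g' volume a b) :
    ∫ x in a..b, g' x = g b - g a := by
  have hzero : ∀ᵐ x, x ∈ uIcc a b →
      HasDerivAt (fun x => g x - ∫ v in a..x, g' v) 0 x := by
    filter_upwards [hderiv, hg'.ae_hasDerivAt_integral] with x hgx hPx hx
    simpa using (hgx hx).fun_sub (hPx hx a left_mem_uIcc)
  obtain ⟨C, hC⟩ :=
    (hg.fun_sub hg'.absolutelyContinuousOnInterval_primitive).const_of_ae_hasDerivAt_zero hzero
  have ha := hC a left_mem_uIcc
  have hb := hC b right_mem_uIcc
  simp only [integral_same, sub_zero] at ha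
  rw [← ha] at hb
  rw [← hb]
  abel

end AbsolutelyContinuousOnInterval

section CaratheodorySolution

variable {E : Type*} [NormedAddCommGroup E] [NormedSpace ℂ E] {x F : ℝ → E}

theorem eq_add_integral_of_sub_eq_integral (hsol : ∀ s t, x t - x s = ∫ τ in s..t, F τ)
    (s : ℝ) : x = fun t => x s + ∫ τ in s..t, F τ := by
  funext t
  rw [← hsol s t]
  abel

theorem continuous_of_sub_eq_integral (hF : LocallyIntegrable F volume)
    (hsol : ∀ s t, x t - x s = ∫ τ in s..t, F τ) : Continuous x := by
  rw [eq_add_integral_of_sub_eq_integral hsol 0]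
  exact continuous_const.add (continuous_primitive hF.intervalIntegrable 0)

theorem ae_hasDerivAt_of_sub_eq_integral [CompleteSpace E] (hF : LocallyIntegrable F volume)
    (hsol : ∀ s t, x t - x s = ∫ τ in s..t, F τ) : ∀ᵐ t, HasDerivAt x (F t) t := by
  filter_upwards [LocallyIntegrable.ae_hasDerivAt_integral hF] with t ht
  rw [eq_add_integral_of_sub_eq_integral hsol 0]
  exact (ht 0).const_add _

theorem smul_sub_smul_eq_integral_of_sub_eq_integral [CompleteSpace E] {e e' : ℝ → ℂ}
    (he : ∀ t, HasDerivAt e (e' t) t) (he' : Continuous e') (hF : LocallyIntegrable F volume)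
    (hsol : ∀ s t, x t - x s = ∫ τ in s..t, F τ) (s t : ℝ) :
    e t • x t - e s • x s = ∫ τ in s..t, (e τ • F τ + e' τ • x τ) := by
  have he_cont : Continuous e := continuous_iff_continuousAt.2 fun t => (he t).continuousAt
  have he_ac : AbsolutelyContinuousOnInterval e s t :=
    .of_sub_eq_integral (he'.intervalIntegrable s t) fun u _ v _ =>
      (integral_eq_sub_of_hasDerivAt (fun w _ => he w) (he'.intervalIntegrable u v)).symm
  have hx_ac : AbsolutelyContinuousOnInterval x s t :=
    .of_sub_eq_integral (hF.intervalIntegrable s t) fun u _ v _ => hsol u v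
  refine (AbsolutelyContinuousOnInterval.integral_eq_sub_of_ae_hasDerivAt
    (he_ac.fun_smul hx_ac) ?_ ?_).symm
  · filter_upwards [ae_hasDerivAt_of_sub_eq_integral hF hsol] with τ hτ _
    exact (he τ).smul hτ
  · exact ((hF.intervalIntegrable s t).continuousOn_smul he_cont.continuousOn).add
      ((he'.smul (continuous_of_sub_eq_integral hF hsol)).intervalIntegrable s t)

theorem integral_cexp_smul_sub_smul_integral_of_sub_eq_integral [CompleteSpace E] (c : ℂ)
    (hF : LocallyIntegrable F volume) (hsol : ∀ s t, x t - x s = ∫ τ in s..t, F τ)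
    (s t : ℝ) :
    (∫ τ in s..t, Complex.exp (-(c * τ)) • F τ)
        - c • ∫ τ in s..t, Complex.exp (-(c * τ)) • x τ
      = Complex.exp (-(c * t)) • x t - Complex.exp (-(c * s)) • x s := by
  set e : ℝ → ℂ := fun τ => Complex.exp (-(c * τ))
  have he : ∀ τ, HasDerivAt e (-c * e τ) τ := fun τ =>
    ((hasDerivAt_id τ).ofReal_comp.const_mul c).neg.cexp.congr_deriv (by simp [e]; ring)
  have hx := continuous_of_sub_eq_integral hF hsol
  have hcomb : ∀ τ, e τ • F τ + (-c * e τ) • x τ = e τ • F τ - c • (e τ • x τ) :=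
    fun τ => by rw [neg_mul, neg_smul, mul_smul, sub_eq_add_neg]
  rw [smul_sub_smul_eq_integral_of_sub_eq_integral he (by fun_prop) hF hsol]
  simp only [hcomb]
  rw [integral_sub (g := fun τ => c • (e τ • x τ))
      ((hF.intervalIntegrable s t).continuousOn_smul (by fun_prop))
      (((by fun_prop : Continuous fun τ => e τ • x τ).const_smul c).intervalIntegrable s t),
    intervalIntegral.integral_smul]

end CaratheodorySolution

theorem phasor_caratheodory_general {n : ℕ}
    (T : ℝ)
    (x : ℝ → EuclideanSpace ℂ (Fin n)) (f : ℝ → EuclideanSpace ℂ (Fin n) → EuclideanSpace ℂ (Fin n))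
    (hf : LocallyIntegrable (fun τ => f τ (x τ)) volume)
    (hsol : ∀ s t : ℝ, x t - x s = ∫ τ in s..t, f τ (x τ)) :
    ∀ k : ℤ,
      (∀ t₀ t₁ : ℝ,
        phasorV T x k t₁ - phasorV T x k t₀
          = ∫ τ in t₀..t₁,
              (phasorV T (fun s => f s (x s)) k τ
                - (Complex.I * (k : ℂ) * ((2 * Real.pi / T : ℝ) : ℂ)) • phasorV T x k τ)) ∧
      (∀ᵐ t : ℝ, HasDerivAt (phasorV T x k)
          (phasorV T (fun s => f s (x s)) k t
            - (Complex.I * (k : ℂ) * ((2 * Real.pi / T : ℝ) : ℂ)) • phasorV T x k t) t) := by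
  intro k
  set c : ℂ := Complex.I * (k : ℂ) * ((2 * Real.pi / T : ℝ) : ℂ)
  set g : ℝ → EuclideanSpace ℂ (Fin n) := fun τ => Complex.exp (-(c * τ)) • x τ
  have hg : Continuous g := by
    have := continuous_of_sub_eq_integral hf hsol
    fun_prop
  have hΦ : ∀ t, phasorV T (fun s => f s (x s)) k t - c • phasorV T x k t
      = (1 / (T : ℂ)) • (g t - g (t - T)) := fun t => by
    rw [← integral_cexp_smul_sub_smul_integral_of_sub_eq_integral c hf hsol, smul_sub,
      smul_comm (1 / (T : ℂ)) c]
    rfl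
  have hderiv : ∀ t, HasDerivAt (phasorV T x k)
      (phasorV T (fun s => f s (x s)) k t - c • phasorV T x k t) t := fun t => by
    rw [hΦ]
    exact (hg.hasDerivAt_integral_sub_const T t).const_smul (1 / (T : ℂ))
  have hΦ_cont :
      Continuous fun t => phasorV T (fun s => f s (x s)) k t - c • phasorV T x k t := by
    simp_rw [hΦ]
    fun_prop
  exact ⟨fun t₀ t₁ => (integral_eq_sub_of_hasDerivAt (fun t _ => hderiv t)
    (hΦ_cont.intervalIntegrable t₀ t₁)).symm, ae_of_all _ hderiv⟩

/-- if `x` solves `ẋ = f(t, x(t))` in the Carathéodory sense (absolutely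
continuous, i.e. `x t − x s = ∫ₛᵗ f(τ, x(τ)) dτ`, with `f(·, x(·))` locally integrable),
then every phasor `X_k` is absolutely continuous and `Ẋ_k = [F(f(·,x(·)))]_k − jkω X_k`
almost everywhere. -/
theorem phasor_caratheodory {n : ℕ}
    (T : ℝ) (hT : 0 < T)
    (x : ℝ → EuclideanSpace ℂ (Fin n)) (f : ℝ → EuclideanSpace ℂ (Fin n) → EuclideanSpace ℂ (Fin n))
    (hf : LocallyIntegrable (fun τ => f τ (x τ)) volume)
    (hsol : ∀ s t : ℝ, x t - x s = ∫ τ in s..t, f τ (x τ)) :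
    ∀ k : ℤ,
      (∀ t₀ t₁ : ℝ,
        phasorV T x k t₁ - phasorV T x k t₀
          = ∫ τ in t₀..t₁,
              (phasorV T (fun s => f s (x s)) k τ
                - (Complex.I * (k : ℂ) * ((2 * Real.pi / T : ℝ) : ℂ)) • phasorV T x k τ)) ∧
      (∀ᵐ t : ℝ, HasDerivAt (phasorV T x k)
          (phasorV T (fun s => f s (x s)) k t
            - (Complex.I * (k : ℂ) * ((2 * Real.pi / T : ℝ) : ℂ)) • phasorV T x k t) t) :=
  phasor_caratheodory_general T x f hf hsol
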